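/- For every t > 0 and x ∈ ℝ, the function u satisfies the third-order relation ∂ₓ³u(t,x) = t·∂ₓ²u(t,x) + x·∂ₓu(t,x) + 2·u(t,x). -/

import Mathlib

open MeasureTheory Real Filter

noncomputable def u (t x : ℝ) : ℂ :=
  (1 / (2 * Real.pi)) *
    ∫ l : ℝ, Complex.I * l *
      Complex.exp (Complex.I * l * x - l ^ 2 * t / 2 + Complex.I * l ^ 3 / 3)

noncomputable def phi (t x l : ℝ) : ℂ :=
  Complex.I * l * x - l ^ 2 * t / 2 + Complex.I * l ^ 3 / 3

noncomputable def G (t : ℝ) (n : ℕ) (x : ℝ) : ℂ :=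
  ∫ l : ℝ, (Complex.I * l) ^ n * Complex.exp (phi t x l)

lemma norm_exp_phi (t x l : ℝ) : ‖Complex.exp (phi t x l)‖ = Real.exp (-(t/2) * l^2) := by
  rw [Complex.norm_exp]
  congr 1
  simp [phi, Complex.add_re, Complex.sub_re, Complex.mul_re, Complex.div_re, Complex.I_re,
    Complex.I_im, Complex.ofReal_re, Complex.ofReal_im, ← Complex.ofReal_pow]
  ring

lemma integrable_aux {t : ℝ} (ht : 0 < t) (n : ℕ) :
    Integrable (fun l : ℝ => |l| ^ n * Real.exp (-(t/2) * l ^ 2)) := by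
  have h := integrable_rpow_mul_exp_neg_mul_sq (b := t/2) (by linarith) (s := (n:ℝ))
    (lt_of_lt_of_le neg_one_lt_zero (Nat.cast_nonneg n))
  rw [show (fun x : ℝ => x ^ (n:ℝ) * Real.exp (-(t/2) * x ^ 2))
      = fun x : ℝ => x ^ n * Real.exp (-(t/2) * x ^ 2) from
    funext fun x => by rw [Real.rpow_natCast]] at h
  have h2 := h.abs
  refine h2.congr ?_
  filter_upwards with l
  simp [abs_mul, abs_pow, abs_of_nonneg (Real.exp_pos _).le]

lemma cont_phi (t x : ℝ) : Continuous (fun l : ℝ => Complex.exp (phi t x l)) := by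
  unfold phi; fun_prop

lemma norm_integrand (t x l : ℝ) (c : ℂ) (n : ℕ) :
    ‖c * (l:ℂ) ^ n * Complex.exp (phi t x l)‖ = ‖c‖ * (|l| ^ n * Real.exp (-(t/2) * l^2)) := by
  rw [norm_mul, norm_mul, norm_exp_phi, norm_pow, Complex.norm_real, Real.norm_eq_abs]
  ring

lemma integrable_integrand {t : ℝ} (ht : 0 < t) (x : ℝ) (c : ℂ) (n : ℕ) :
    Integrable (fun l : ℝ => c * (l:ℂ) ^ n * Complex.exp (phi t x l)) := by
  refine (((integrable_aux ht n).const_mul ‖c‖).mono' ?_ ?_)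
  · apply Continuous.aestronglyMeasurable
    have := cont_phi t x
    fun_prop
  · filter_upwards with l
    rw [norm_integrand]

lemma norm_integrand' (t x l : ℝ) (n : ℕ) :
    ‖(Complex.I * l) ^ n * Complex.exp (phi t x l)‖ = |l| ^ n * Real.exp (-(t/2) * l^2) := by
  rw [norm_mul, norm_exp_phi, norm_pow, norm_mul, Complex.norm_I, Complex.norm_real,
    Real.norm_eq_abs, one_mul]

lemma meas_integrand (t x : ℝ) (n : ℕ) :
    AEStronglyMeasurable (fun l : ℝ => (Complex.I * l) ^ n * Complex.exp (phi t x l)) volume := by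
  apply Continuous.aestronglyMeasurable
  have := cont_phi t x
  fun_prop

lemma integrable_Fn {t : ℝ} (ht : 0 < t) (x : ℝ) (n : ℕ) :
    Integrable (fun l : ℝ => (Complex.I * l) ^ n * Complex.exp (phi t x l)) := by
  refine ((integrable_aux ht n).mono' (meas_integrand t x n) ?_)
  filter_upwards with l
  rw [norm_integrand' t x l n]

lemma hasDerivAt_x (t l : ℝ) (n : ℕ) (x : ℝ) :
    HasDerivAt (fun x : ℝ => (Complex.I * l) ^ n * Complex.exp (phi t x l))
      ((Complex.I * l) ^ (n+1) * Complex.exp (phi t x l)) x := by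
  have h : HasDerivAt (fun w : ℂ => (Complex.I * l) ^ n *
      Complex.exp (Complex.I * l * w - l ^ 2 * t / 2 + Complex.I * l ^ 3 / 3))
      ((Complex.I * l) ^ n * (Complex.exp (Complex.I * l * (x:ℂ) - l ^ 2 * t / 2
        + Complex.I * l ^ 3 / 3) * (Complex.I * l * 1))) (x : ℂ) :=
    ((((hasDerivAt_id (x:ℂ)).const_mul (Complex.I * (l:ℂ))).sub_const _).add_const _).cexp.const_mul _
  have h2 := h.comp_ofReal
  convert h2 using 1
  all_goals (unfold phi; ring)

lemma hasDerivAt_G {t : ℝ} (ht : 0 < t) (n : ℕ) (x : ℝ) :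
    HasDerivAt (G t n) (G t (n+1) x) x := by
  have := hasDerivAt_integral_of_dominated_loc_of_deriv_le (μ := volume) (x₀ := x)
    (F := fun x (l : ℝ) => (Complex.I * l) ^ n * Complex.exp (phi t x l))
    (F' := fun x (l : ℝ) => (Complex.I * l) ^ (n+1) * Complex.exp (phi t x l))
    (bound := fun l => |l| ^ (n+1) * Real.exp (-(t/2) * l ^ 2))
    (Metric.ball_mem_nhds x one_pos)
    (Filter.Eventually.of_forall fun y => meas_integrand t y n)
    (integrable_Fn ht x n)
    (meas_integrand t x (n+1))
    (Filter.Eventually.of_forall fun l => fun y _ => le_of_eq (norm_integrand' t y l (n+1)))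
    (integrable_aux ht (n+1))
    (Filter.Eventually.of_forall fun l => fun y _ => hasDerivAt_x t l n y)
  exact this.2

lemma hasDerivAt_l (t x : ℝ) (l : ℝ) :
    HasDerivAt (fun l : ℝ => -Complex.I * l ^ 2 * Complex.exp (phi t x l))
      (((l:ℂ)^4 + Complex.I * t * l^3 + x * l^2 - 2 * Complex.I * l) * Complex.exp (phi t x l)) l := by
  have hg : HasDerivAt (fun w : ℂ => Complex.I * w * x - w ^ 2 * t / 2 + Complex.I * w ^ 3 / 3)
      (Complex.I * 1 * (x:ℂ) - (2 * (l:ℂ) ^ 1) * t / 2 + Complex.I * (3 * (l:ℂ) ^ 2) / 3) (l:ℂ) := by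
    exact ((((hasDerivAt_id (l:ℂ)).const_mul Complex.I).mul_const (x:ℂ)).sub
      (((hasDerivAt_pow 2 (l:ℂ)).mul_const (t:ℂ)).div_const 2)).add
      (((hasDerivAt_pow 3 (l:ℂ)).const_mul Complex.I).div_const 3)
  have hq : HasDerivAt (fun w : ℂ => -Complex.I * w ^ 2) (-Complex.I * (2 * (l:ℂ) ^ 1)) (l:ℂ) :=
    (hasDerivAt_pow 2 (l:ℂ)).const_mul (-Complex.I)
  have h := (hq.mul hg.cexp).comp_ofReal
  convert h using 1
  · funext y
    unfold phi
    simp only [Pi.mul_apply]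
  unfold phi
  ring_nf
  simp only [Complex.I_sq]
  ring

lemma tendsto_f {t x : ℝ} (ht : 0 < t) (F : Filter ℝ)
    (hF : Tendsto (fun l : ℝ => l ^ 2) F atTop) :
    Tendsto (fun l : ℝ => -Complex.I * l ^ 2 * Complex.exp (phi t x l)) F (nhds 0) := by
  have hsq : Tendsto (fun l : ℝ => (t/2) * l ^ 2) F atTop :=
    hF.const_mul_atTop (by positivity)
  have hb : Tendsto (fun y : ℝ => y * Real.exp (-y)) atTop (nhds 0) := by
    simpa using tendsto_pow_mul_exp_neg_atTop_nhds_zero 1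
  have hcomp := (hb.comp hsq).const_mul (2/t)
  rw [mul_zero] at hcomp
  simp only [Function.comp_def] at hcomp
  apply squeeze_zero_norm _ hcomp
  intro l
  rw [norm_mul, norm_mul, norm_neg, Complex.norm_I, one_mul, norm_pow, Complex.norm_real,
    Real.norm_eq_abs, sq_abs, norm_exp_phi]
  have h2 : (2:ℝ)/t * (t/2 * l^2 * Real.exp (-(t/2 * l^2))) = l^2 * Real.exp (-(t/2) * l^2) := by
    rw [neg_mul]; field_simp
  exact le_of_eq h2.symm

lemma tendsto_sq_atBot : Tendsto (fun l : ℝ => l ^ 2) atBot atTop := by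
  have h1 : Tendsto (fun x : ℝ => x ^ 2) atTop atTop := tendsto_pow_atTop (by norm_num)
  have h2 : Tendsto (fun x : ℝ => -x) atBot atTop := tendsto_neg_atBot_atTop
  have := h1.comp h2
  simp only [Function.comp_def, neg_sq] at this
  simpa using this

lemma key {t : ℝ} (ht : 0 < t) (x : ℝ) :
    G t 4 x = t * G t 3 x + x * G t 2 x + 2 * G t 1 x := by
  have hrw : ∀ l : ℝ, ((l:ℂ)^4 + Complex.I * t * l^3 + x * l^2 - 2 * Complex.I * l)
        * Complex.exp (phi t x l)
      = (Complex.I * l)^4 * Complex.exp (phi t x l)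
        - (t:ℂ) * ((Complex.I * l)^3 * Complex.exp (phi t x l))
        - (x:ℂ) * ((Complex.I * l)^2 * Complex.exp (phi t x l))
        - 2 * ((Complex.I * l)^1 * Complex.exp (phi t x l)) := by
    intro l
    have hI := Complex.I_sq
    linear_combination ((1 - Complex.I^2) * (l:ℂ)^4 + (t:ℂ) * Complex.I * l^3
      + (x:ℂ) * l^2) * Complex.exp (phi t x l) * hI
  have hint : Integrable (fun l : ℝ =>
      ((l:ℂ)^4 + Complex.I * t * l^3 + x * l^2 - 2 * Complex.I * l) * Complex.exp (phi t x l)) := by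
    have h := (((integrable_integrand ht x 1 4).add
      (integrable_integrand ht x (Complex.I * t) 3)).add
      (integrable_integrand ht x (x:ℂ) 2)).sub
      (integrable_integrand ht x (2 * Complex.I) 1)
    refine h.congr ?_
    filter_upwards with l
    simp only [Pi.add_apply, Pi.sub_apply]
    ring
  have hzero : (∫ l : ℝ, ((l:ℂ)^4 + Complex.I * t * l^3 + x * l^2 - 2 * Complex.I * l)
        * Complex.exp (phi t x l)) = 0 - 0 :=
    integral_of_hasDerivAt_of_tendsto
      (f := fun l : ℝ => -Complex.I * l ^ 2 * Complex.exp (phi t x l))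
      (fun l => hasDerivAt_l t x l) hint
      (tendsto_f ht atBot tendsto_sq_atBot)
      (tendsto_f ht atTop (tendsto_pow_atTop (by norm_num)))
  rw [sub_self] at hzero
  have h4 := integrable_Fn ht x 4
  have h3 := integrable_Fn ht x 3
  have h2 := integrable_Fn ht x 2
  have h1 := integrable_Fn ht x 1
  have hB3 : Integrable (fun l : ℝ =>
      (t:ℂ) * ((Complex.I * l)^3 * Complex.exp (phi t x l))) := h3.const_mul _
  have hB2 : Integrable (fun l : ℝ =>
      (x:ℂ) * ((Complex.I * l)^2 * Complex.exp (phi t x l))) := h2.const_mul _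
  have hB1 : Integrable (fun l : ℝ =>
      (2:ℂ) * ((Complex.I * l)^1 * Complex.exp (phi t x l))) := h1.const_mul _
  have hS1 : Integrable (fun l : ℝ =>
      (Complex.I * l)^4 * Complex.exp (phi t x l)
        - (t:ℂ) * ((Complex.I * l)^3 * Complex.exp (phi t x l))) := h4.sub hB3
  have hS2 : Integrable (fun l : ℝ =>
      (Complex.I * l)^4 * Complex.exp (phi t x l)
        - (t:ℂ) * ((Complex.I * l)^3 * Complex.exp (phi t x l))
        - (x:ℂ) * ((Complex.I * l)^2 * Complex.exp (phi t x l))) := hS1.sub hB2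
  rw [show (fun l : ℝ => ((l:ℂ)^4 + Complex.I * t * l^3 + x * l^2 - 2 * Complex.I * l)
        * Complex.exp (phi t x l))
      = fun l : ℝ => (Complex.I * l)^4 * Complex.exp (phi t x l)
        - (t:ℂ) * ((Complex.I * l)^3 * Complex.exp (phi t x l))
        - (x:ℂ) * ((Complex.I * l)^2 * Complex.exp (phi t x l))
        - 2 * ((Complex.I * l)^1 * Complex.exp (phi t x l))
      from funext hrw] at hzero
  rw [integral_sub hS2 hB1, integral_sub hS1 hB2, integral_sub h4 hB3,
    integral_const_mul, integral_const_mul, integral_const_mul] at hzero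
  have hfin : G t 4 x - t * G t 3 x - x * G t 2 x - 2 * G t 1 x = 0 := hzero
  linear_combination hfin

/-- The heat evolution of `Ai'` satisfies
`∂ₓ³u = t·∂ₓ²u + x·∂ₓu + 2·u`. -/
theorem heat_airy_deriv_third_order_identity :
    ∀ t > (0 : ℝ), ∀ x : ℝ,
      iteratedDeriv 3 (u t) x
        = (t : ℂ) * iteratedDeriv 2 (u t) x + (x : ℂ) * deriv (u t) x
          + 2 * u t x := by
  intro t ht x
  set c : ℂ := (1 / (2 * (Real.pi : ℂ))) with hc
  have hu : u t = fun y => c * G t 1 y := by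
    funext y
    simp only [u, G, phi, pow_one, hc]
  have hd1 : deriv (u t) = fun y => c * G t 2 y := by
    funext y
    rw [hu]
    exact ((hasDerivAt_G ht 1 y).const_mul c).deriv
  have hd2 : deriv (fun y => c * G t 2 y) = fun y => c * G t 3 y := by
    funext y
    exact ((hasDerivAt_G ht 2 y).const_mul c).deriv
  have hd3 : deriv (fun y => c * G t 3 y) x = c * G t 4 x :=
    ((hasDerivAt_G ht 3 x).const_mul c).deriv
  have hit2 : iteratedDeriv 2 (u t) = fun y => c * G t 3 y := by
    rw [show (2:ℕ) = 1 + 1 from rfl, iteratedDeriv_succ, iteratedDeriv_one, hd1, hd2]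
  have hit3 : iteratedDeriv 3 (u t) x = c * G t 4 x := by
    rw [show (3:ℕ) = 2 + 1 from rfl, iteratedDeriv_succ, hit2, hd3]
  rw [hit3, hit2, hd1, hu]
  have hkey := key ht x
  linear_combination c * hkey
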